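/- Let B be a binomial ring, A an associative unital B-algebra, and n a natural number. The ideal I_n ⊆ B[A] (an ideal for the sum multiplication [x][y] = [x+y]) is also a two-sided ideal for the product multiplication [a] ⋆ [b] = [ab]: for every ω ∈ B[A] and every ν ∈ I_n, both ω ⋆ ν and ν ⋆ ω lie in I_n. Consequently the product multiplication descends to the augmentation algebra B[A]_n = B[A]/I_n. -/

import Mathlib

set_option linter.unusedSectionVars false

open Finset

universe u

variable (B : Type u) [CommRing B] [BinomialRing B]
variable (M : Type u) [AddCommGroup M] [Module B M]

/-- The basis symbol `[x]` in the monoid algebra `B[M]` of the additive monoid `M`. -/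
noncomputable def brk (x : M) : AddMonoidAlgebra B M := AddMonoidAlgebra.single x 1

/-- The ideal `I_n ⊆ B[M]` (for the sum multiplication `[x][y] = [x+y]`), generated by the
`(n+1)`-fold deviations `[x_1 ⊥ ⋯ ⊥ x_{n+1}] = ∏ ([x_i] − [0])` and the elements
`[r·x] − ∑_{k=0}^n binom(r,k) ([x] − [0])^k`. -/
noncomputable def augIdeal (n : ℕ) : Ideal (AddMonoidAlgebra B M) :=
  Ideal.span
    ({ω | ∃ x : Fin (n + 1) → M, ω = ∏ i, (brk B M (x i) - brk B M 0)} ∪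
      {ω | ∃ (r : B) (x : M), ω =
        brk B M (r • x) -
          ∑ k ∈ Finset.range (n + 1), Ring.choose r k • (brk B M x - brk B M 0) ^ k})

/-- The `n`-th augmentation algebra `B[M]_n = B[M]/I_n`, as a `B`-module. -/
noncomputable def augAlgebra (n : ℕ) : Type u :=
  AddMonoidAlgebra B M ⧸ (augIdeal B M n).restrictScalars B

noncomputable instance (n : ℕ) : AddCommGroup (augAlgebra B M n) :=
  inferInstanceAs (AddCommGroup (AddMonoidAlgebra B M ⧸ (augIdeal B M n).restrictScalars B))

noncomputable instance (n : ℕ) : Module B (augAlgebra B M n) :=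
  inferInstanceAs (Module B (AddMonoidAlgebra B M ⧸ (augIdeal B M n).restrictScalars B))

/-- The quotient map `B[M] → B[M]_n`. -/
noncomputable def augMk (n : ℕ) : AddMonoidAlgebra B M →ₗ[B] augAlgebra B M n :=
  ((augIdeal B M n).restrictScalars B).mkQ

variable (A : Type u) [Ring A] [Algebra B A]

/-- The product multiplication `[a] ⋆ [b] = [ab]` on `B[A]`, for a `B`-algebra `A`. -/
noncomputable def starMul (ω ν : AddMonoidAlgebra B A) : AddMonoidAlgebra B A :=
  Finsupp.sum ω.coeff fun x a => Finsupp.sum ν.coeff fun y b => AddMonoidAlgebra.single (x * y) (a * b)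

/-!
Under `⋆`, multiplying by a basis element `[x]` is the map of `B[A]` induced by the `B`-linear
map `y ↦ x * y` (resp. `y ↦ y * x`) of `A`, and the map induced by any `B`-linear map of the
underlying modules sends the generators of `I_n` to generators of `I_n`. As `⋆` is bilinear,
`I_n` is therefore a two-sided `⋆`-ideal and `⋆` descends to `B[A]/I_n`.
-/

open AddMonoidAlgebra

section
variable {B M A}

theorem mapDomain_mem_augIdeal {N : Type u} [AddCommGroup N] [Module B N] (f : M →ₗ[B] N)
    {n : ℕ} {ν : AddMonoidAlgebra B M} (hν : ν ∈ augIdeal B M n) :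
    mapDomain f ν ∈ augIdeal B N n := by
  suffices augIdeal B M n ≤ (augIdeal B N n).comap (mapDomainAlgHom B B f.toAddMonoidHom) from
    this hν
  have map_brk (x : M) : mapDomainAlgHom B B f.toAddMonoidHom (brk B M x) = brk B N (f x) :=
    mapDomain_single
  rw [augIdeal, Ideal.span_le]
  rintro _ (⟨x, rfl⟩ | ⟨r, x, rfl⟩)
  · refine Ideal.subset_span (Or.inl ⟨f ∘ x, ?_⟩)
    simp only [map_prod, map_sub, map_brk, map_zero, Function.comp_apply]
  · refine Ideal.subset_span (Or.inr ⟨r, f x, ?_⟩)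
    simp only [map_sub, map_sum, map_smul, map_pow, map_brk, map_zero]

theorem starMul_eq_sum_smul_mapDomain_mul_left (ω ν : AddMonoidAlgebra B A) :
    starMul B A ω ν = ω.coeff.sum fun x a => a • mapDomain (x * ·) ν := by
  refine Finsupp.sum_congr fun x _ => ?_
  simp only [mapDomain, Finsupp.mapDomain, ofCoeff_finsuppSum, ofCoeff_single, Finsupp.smul_sum,
    smul_single, smul_eq_mul]

theorem starMul_eq_sum_smul_mapDomain_mul_right (ν ω : AddMonoidAlgebra B A) :
    starMul B A ν ω = ω.coeff.sum fun x a => a • mapDomain (· * x) ν := by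
  rw [starMul, Finsupp.sum_comm]
  refine Finsupp.sum_congr fun x _ => ?_
  simp only [mapDomain, Finsupp.mapDomain, ofCoeff_finsuppSum, ofCoeff_single, Finsupp.smul_sum,
    smul_single, smul_eq_mul, mul_comm]

theorem starMul_mem_augIdeal_of_mem_right (ω : AddMonoidAlgebra B A) {n : ℕ}
    {ν : AddMonoidAlgebra B A} (hν : ν ∈ augIdeal B A n) :
    starMul B A ω ν ∈ augIdeal B A n := by
  rw [starMul_eq_sum_smul_mapDomain_mul_left]
  exact Ideal.sum_mem _ fun x _ =>
    Submodule.smul_of_tower_mem _ _ (mapDomain_mem_augIdeal (LinearMap.mulLeft B x) hν)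

theorem starMul_mem_augIdeal_of_mem_left (ω : AddMonoidAlgebra B A) {n : ℕ}
    {ν : AddMonoidAlgebra B A} (hν : ν ∈ augIdeal B A n) :
    starMul B A ν ω ∈ augIdeal B A n := by
  rw [starMul_eq_sum_smul_mapDomain_mul_right]
  exact Ideal.sum_mem _ fun x _ =>
    Submodule.smul_of_tower_mem _ _ (mapDomain_mem_augIdeal (LinearMap.mulRight B x) hν)

theorem starMul_eq_monoidAlgebra_mul (ω ν : AddMonoidAlgebra B A) :
    starMul B A ω ν =
      .ofCoeff (MonoidAlgebra.ofCoeff ω.coeff * MonoidAlgebra.ofCoeff ν.coeff).coeff := by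
  simp only [starMul, MonoidAlgebra.mul_def, MonoidAlgebra.coeff_finsuppSum,
    MonoidAlgebra.coeff_single, ofCoeff_finsuppSum, ofCoeff_single]

theorem starMul_sub_starMul (ω₁ ω₂ ν₁ ν₂ : AddMonoidAlgebra B A) :
    starMul B A ω₁ ν₁ - starMul B A ω₂ ν₂ =
      starMul B A (ω₁ - ω₂) ν₁ + starMul B A ω₂ (ν₁ - ν₂) := by
  apply coeff_injective
  simp [starMul_eq_monoidAlgebra_mul, sub_mul, mul_sub]

end

/-- `I_n` is a two-sided ideal for the product multiplication `⋆`, and hence `⋆` descends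
to the augmentation algebra `B[A]_n = B[A]/I_n`. -/
theorem augIdeal_starMul_stable (B : Type u) [CommRing B] [BinomialRing B]
    (A : Type u) [Ring A] [Algebra B A] (n : ℕ) :
    (∀ ω : AddMonoidAlgebra B A, ∀ ν ∈ augIdeal B A n,
        starMul B A ω ν ∈ augIdeal B A n ∧ starMul B A ν ω ∈ augIdeal B A n) ∧
      ∃ star' : augAlgebra B A n → augAlgebra B A n → augAlgebra B A n,
        ∀ ω ν : AddMonoidAlgebra B A,
          star' (augMk B A n ω) (augMk B A n ν) = augMk B A n (starMul B A ω ν) := by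
  refine ⟨fun ω ν hν =>
    ⟨starMul_mem_augIdeal_of_mem_right ω hν, starMul_mem_augIdeal_of_mem_left ω hν⟩, ?_⟩
  refine ⟨Quotient.map₂ (starMul B A) ?_, fun ω ν => rfl⟩
  intro ω₁ ω₂ hω ν₁ ν₂ hν
  replace hω := (Submodule.quotientRel_def _).mp hω
  replace hν := (Submodule.quotientRel_def _).mp hν
  refine (Submodule.quotientRel_def _).mpr ?_
  rw [starMul_sub_starMul]
  exact add_mem (starMul_mem_augIdeal_of_mem_left ν₁ hω)
    (starMul_mem_augIdeal_of_mem_right ω₂ hν)
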